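/- arXiv:nlin/0310010 — 3 statements merged into one kernel-verified Lean document; each statement's English description precedes it below -/
import Mathlib

section
/- Let A be a commutative ℝ-algebra of formal power series in ℏ over a base algebra, and let X, Y be commuting derivations. Define the product f ⋆ g := Σ_{s≥0} (ℏ^s/s!) Y^s(f) · X^s(g). Then ⋆ is associative. -/
/-!
Write `D̂` for the `ℏ`-linear extension of a derivation `D` of `A`; it is a derivation of `A[[ℏ]]`.
Then `f ⋆ g = ∑ₛ ℏˢ Pₛ(f, g)` with `Pₛ(f, g) = (s!)⁻¹ Ŷˢf X̂ˢg`, and since `Ŷˢ`, `X̂ˢ` and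
multiplication commute with such formal sums, the coefficient of `ℏᵏ` in `(f ⋆ g) ⋆ h` is
`∑_{s+t=k} Pₛ(Pₜ(f, g), h)`, and in `f ⋆ (g ⋆ h)` it is `∑_{s+t=k} Pₛ(f, Pₜ(g, h))`.
The Leibniz rule for the divided powers `Dˢ/s!` has no binomial coefficients, so with
`X Y = Y X` both sums expand into the same trinomial sum
`∑_{a+b+c=k} (a! b! c!)⁻¹ Y^{a+b}f · XᵃYᶜg · X^{b+c}h`, indexed in two different orders.
-/

/-- The Kupershmidt–Manin type product `f ⋆ g = Σ_{s≥0} (ℏ^s/s!) Y^s(f) X^s(g)`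
on `A[[ℏ]]`, with `X`, `Y` extended ℏ-linearly. -/
noncomputable def kmStar {A : Type*} [CommRing A] [Algebra ℝ A]
    (X Y : A → A) (f g : PowerSeries A) : PowerSeries A :=
  PowerSeries.mk fun n =>
    ∑ s ∈ Finset.range (n + 1), ∑ ij ∈ Finset.HasAntidiagonal.antidiagonal (n - s),
      ((s.factorial : ℝ))⁻¹ •
        (Y^[s] (PowerSeries.coeff (R := A) ij.1 f) * X^[s] (PowerSeries.coeff (R := A) ij.2 g))

open Finset PowerSeries
open scoped Nat

theorem Finset.sum_antidiagonal_antidiagonal_assoc {A M : Type*} [AddMonoid A] [HasAntidiagonal A]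
    [AddCommMonoid M] (n : A) (f : A → A → A → M) :
    ∑ p ∈ antidiagonal n, ∑ q ∈ antidiagonal p.1, f q.1 q.2 p.2 =
      ∑ p ∈ antidiagonal n, ∑ q ∈ antidiagonal p.2, f p.1 q.1 q.2 := by
  simp only [sum_sigma']
  apply sum_nbij' (fun x => ⟨(x.2.1, x.2.2 + x.1.2), (x.2.2, x.1.2)⟩)
    (fun x => ⟨(x.1.1 + x.2.1, x.2.2), (x.1.1, x.2.1)⟩) <;> aesop (add simp [add_assoc])

theorem Finset.Nat.sum_antidiagonal_antidiagonal_rotate {M : Type*} [AddCommMonoid M] (n : ℕ)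
    (f : ℕ → ℕ → ℕ → M) :
    ∑ p ∈ antidiagonal n, ∑ q ∈ antidiagonal p.1, f p.2 q.1 q.2 =
      ∑ p ∈ antidiagonal n, ∑ q ∈ antidiagonal p.1, f q.1 q.2 p.2 := by
  rw [sum_antidiagonal_antidiagonal_assoc, ← Nat.sum_antidiagonal_swap]
  rfl

namespace Derivation

section CommSemiring

variable {R A : Type*} [CommSemiring R] [CommSemiring A] [Algebra R A]

theorem iterate_map_smul (D : Derivation R A A) (n : ℕ) (c : R) (a : A) :
    D^[n] (c • a) = c • D^[n] a := by
  have := _root_.map_smul (D.toLinearMap ^ n) c a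
  rwa [Module.End.coe_pow] at this

theorem iterate_apply_mul (D : Derivation R A A) (n : ℕ) (a b : A) :
    D^[n] (a * b) = ∑ ij ∈ antidiagonal n, n.choose ij.1 • (D^[ij.1] a * D^[ij.2] b) := by
  induction n with
  | zero => simp
  | succ n ih =>
    rw [sum_antidiagonal_choose_succ_nsmul (M := A) (fun i j => D^[i] a * D^[j] b) n]
    simp only [Function.iterate_succ_apply', ih, map_sum, map_nsmul, leibniz, smul_eq_mul,
      smul_add, sum_add_distrib]
    refine congrArg _ (sum_congr rfl fun ij hij => ?_)
    rw [n.choose_symm_of_eq_add (mem_antidiagonal.1 hij).symm, mul_comm]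

noncomputable def mapPowerSeries (D : Derivation R A A) : Derivation R A⟦X⟧ A⟦X⟧ where
  toFun f := PowerSeries.mk fun n => D (coeff n f)
  map_add' f g := by ext n; simp
  map_smul' c f := by ext n; simp
  map_one_eq_zero' := by ext n; simp [coeff_one, apply_ite D]
  leibniz' f g := by
    ext n
    simp only [LinearMap.coe_mk, AddHom.coe_mk, coeff_mul, map_sum, leibniz, smul_eq_mul,
      sum_add_distrib, coeff_mk, map_add]
    congr 1
    conv_rhs => rw [← Nat.sum_antidiagonal_swap]
    simp only [Prod.fst_swap, Prod.snd_swap, mul_comm]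

@[simp]
theorem coeff_mapPowerSeries (D : Derivation R A A) (f : A⟦X⟧) (n : ℕ) :
    coeff n (D.mapPowerSeries f) = D (coeff n f) :=
  coeff_mk n fun n => D (coeff n f)

theorem coeff_iterate_mapPowerSeries (D : Derivation R A A) (s n : ℕ) (f : A⟦X⟧) :
    coeff n ((⇑D.mapPowerSeries)^[s] f) = (⇑D)^[s] (coeff n f) := by
  induction s with
  | zero => rfl
  | succ s ih => simp only [Function.iterate_succ_apply', coeff_mapPowerSeries, ih]

theorem mapPowerSeries_comm {X Y : Derivation R A A} (h : ∀ a, X (Y a) = Y (X a)) (f : A⟦X⟧) :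
    X.mapPowerSeries (Y.mapPowerSeries f) = Y.mapPowerSeries (X.mapPowerSeries f) := by
  ext n; simp [h]

end CommSemiring

theorem inv_factorial_smul_iterate_apply_mul {K A : Type*} [Field K] [CharZero K] [CommSemiring A]
    [Algebra K A] (D : Derivation K A A) (n : ℕ) (a b : A) :
    (n ! : K)⁻¹ • D^[n] (a * b) =
      ∑ ij ∈ antidiagonal n, ((ij.1 ! : K)⁻¹ * (ij.2 ! : K)⁻¹) • (D^[ij.1] a * D^[ij.2] b) := by
  rw [iterate_apply_mul, smul_sum]
  refine sum_congr rfl fun ⟨i, j⟩ hij => ?_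
  obtain rfl : i + j = n := mem_antidiagonal.1 hij
  rw [← Nat.cast_smul_eq_nsmul K, smul_smul, Nat.cast_add_choose]
  have hfac : ((i + j)! : K) ≠ 0 := Nat.cast_ne_zero.2 (Nat.factorial_ne_zero _)
  congr 1
  field_simp

end Derivation

section KMTerm

variable {K B : Type*} [Field K] [CommSemiring B] [Algebra K B]

/-- The term `Pₛ(f, g)` of `f ⋆ g = ∑ₛ ℏˢ Pₛ(f, g)`, for derivations of `B = A[[ℏ]]`. -/
noncomputable def kmTerm (X Y : Derivation K B B) (s : ℕ) (f g : B) : B :=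
  (s ! : K)⁻¹ • (Y^[s] f * X^[s] g)

theorem sum_antidiagonal_kmTerm_assoc [CharZero K] (X Y : Derivation K B B)
    (hXY : ∀ b, X (Y b) = Y (X b)) (k : ℕ) (f g h : B) :
    ∑ p ∈ antidiagonal k, kmTerm X Y p.1 (kmTerm X Y p.2 f g) h =
      ∑ p ∈ antidiagonal k, kmTerm X Y p.1 f (kmTerm X Y p.2 g h) := by
  have hYX (m n : ℕ) (b : B) : Y^[m] (X^[n] b) = X^[n] (Y^[m] b) :=
    ((Function.Commute.iterate_iterate hXY n m) b).symm
  set T : ℕ → ℕ → ℕ → B := fun a b c => ((a ! : K)⁻¹ * ((b ! : K)⁻¹ * (c ! : K)⁻¹)) •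
    (Y^[b + a] f * X^[a] (Y^[c] g) * X^[b + c] h) with hT
  have left (s t : ℕ) : kmTerm X Y s (kmTerm X Y t f g) h = ∑ q ∈ antidiagonal s, T t q.1 q.2 := by
    simp only [kmTerm, Derivation.iterate_map_smul, smul_mul_assoc]
    rw [smul_comm, ← smul_mul_assoc ((s ! : K)⁻¹), Derivation.inv_factorial_smul_iterate_apply_mul,
      sum_mul, smul_sum]
    refine sum_congr rfl fun ⟨u, v⟩ huv => ?_
    obtain rfl : u + v = s := mem_antidiagonal.1 huv
    simp only [hT, smul_mul_assoc, smul_smul, ← Function.iterate_add_apply, hYX]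
  have right (s t : ℕ) : kmTerm X Y s f (kmTerm X Y t g h) = ∑ q ∈ antidiagonal s, T q.1 q.2 t := by
    simp only [kmTerm, Derivation.iterate_map_smul, mul_smul_comm]
    rw [smul_comm, ← mul_smul_comm, Derivation.inv_factorial_smul_iterate_apply_mul, mul_sum,
      smul_sum]
    refine sum_congr rfl fun ⟨u, v⟩ huv => ?_
    obtain rfl : u + v = s := mem_antidiagonal.1 huv
    simp only [hT, mul_smul_comm, smul_smul, ← Function.iterate_add_apply]
    rw [add_comm v u]
    congr 1 <;> ring
  simp only [left, right]
  exact Finset.Nat.sum_antidiagonal_antidiagonal_rotate k T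

end KMTerm

namespace PowerSeries

section Semiring

variable {R : Type*} [Semiring R]

/-- The formal sum `∑ₛ X ^ s * F s`: only the terms with `s ≤ n` contribute to `coeff n`. -/
noncomputable def sumXPowMul (F : ℕ → R⟦X⟧) : R⟦X⟧ :=
  mk fun n => ∑ p ∈ antidiagonal n, coeff p.2 (F p.1)

theorem coeff_sumXPowMul (F : ℕ → R⟦X⟧) (n : ℕ) :
    coeff n (sumXPowMul F) = ∑ p ∈ antidiagonal n, coeff p.2 (F p.1) :=
  coeff_mk _ _

theorem sumXPowMul_mul (F : ℕ → R⟦X⟧) (g : R⟦X⟧) :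
    sumXPowMul F * g = sumXPowMul fun s => F s * g := by
  ext n
  simp only [coeff_mul, coeff_sumXPowMul, sum_mul]
  exact sum_antidiagonal_antidiagonal_assoc n fun s m j => coeff m (F s) * coeff j g

theorem sumXPowMul_sumXPowMul (F : ℕ → ℕ → R⟦X⟧) :
    sumXPowMul (fun s => sumXPowMul (F s)) =
      sumXPowMul fun k => ∑ p ∈ antidiagonal k, F p.1 p.2 := by
  ext n
  simp only [coeff_sumXPowMul, map_sum]
  exact (sum_antidiagonal_antidiagonal_assoc n fun s t m => coeff m (F s t)).symm

theorem smul_sumXPowMul {S : Type*} [Semiring S] [Module S R] (c : S) (F : ℕ → R⟦X⟧) :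
    c • sumXPowMul F = sumXPowMul fun s => c • F s := by
  ext n
  simp only [coeff_smul, coeff_sumXPowMul, smul_sum]

end Semiring

theorem mul_sumXPowMul {R : Type*} [CommSemiring R] (f : R⟦X⟧) (G : ℕ → R⟦X⟧) :
    f * sumXPowMul G = sumXPowMul fun s => f * G s := by
  simp only [mul_comm f, sumXPowMul_mul]

theorem iterate_mapPowerSeries_sumXPowMul {R A : Type*} [CommSemiring R] [CommSemiring A]
    [Algebra R A] (D : Derivation R A A) (s : ℕ) (F : ℕ → A⟦X⟧) :
    (⇑D.mapPowerSeries)^[s] (sumXPowMul F) = sumXPowMul fun t => (⇑D.mapPowerSeries)^[s] (F t) := by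
  induction s with
  | zero => rfl
  | succ s ih =>
    ext n
    simp only [Function.iterate_succ_apply', ih, Derivation.coeff_mapPowerSeries, coeff_sumXPowMul,
      map_sum]

section KMTerm

variable {K A : Type*} [Field K] [CommSemiring A] [Algebra K A]

theorem kmTerm_sumXPowMul_left (X Y : Derivation K A A) (s : ℕ) (F : ℕ → A⟦X⟧) (h : A⟦X⟧) :
    kmTerm X.mapPowerSeries Y.mapPowerSeries s (sumXPowMul F) h =
      sumXPowMul fun t => kmTerm X.mapPowerSeries Y.mapPowerSeries s (F t) h := by
  simp only [kmTerm, iterate_mapPowerSeries_sumXPowMul, sumXPowMul_mul, smul_sumXPowMul]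

theorem kmTerm_sumXPowMul_right (X Y : Derivation K A A) (s : ℕ) (f : A⟦X⟧) (G : ℕ → A⟦X⟧) :
    kmTerm X.mapPowerSeries Y.mapPowerSeries s f (sumXPowMul G) =
      sumXPowMul fun t => kmTerm X.mapPowerSeries Y.mapPowerSeries s f (G t) := by
  simp only [kmTerm, iterate_mapPowerSeries_sumXPowMul, mul_sumXPowMul, smul_sumXPowMul]

end KMTerm

end PowerSeries

theorem kmStar_eq_sumXPowMul {A : Type*} [CommRing A] [Algebra ℝ A] (X Y : Derivation ℝ A A)
    (f g : A⟦X⟧) :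
    kmStar ⇑X ⇑Y f g = sumXPowMul fun s => kmTerm X.mapPowerSeries Y.mapPowerSeries s f g := by
  ext n
  rw [kmStar, coeff_mk, coeff_sumXPowMul, Nat.sum_antidiagonal_eq_sum_range_succ
    fun s m => coeff m (kmTerm X.mapPowerSeries Y.mapPowerSeries s f g)]
  refine sum_congr rfl fun s _ => ?_
  simp only [kmTerm, coeff_smul, coeff_mul, Derivation.coeff_iterate_mapPowerSeries, smul_sum]

/-- the KM product built from commuting derivations is associative. -/
theorem stmt1 {A : Type*} [CommRing A] [Algebra ℝ A]
    (X Y : Derivation ℝ A A) (hcomm : ∀ a, X (Y a) = Y (X a))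
    (f g h : PowerSeries A) :
    kmStar ⇑X ⇑Y (kmStar ⇑X ⇑Y f g) h = kmStar ⇑X ⇑Y f (kmStar ⇑X ⇑Y g h) := by
  simp only [kmStar_eq_sumXPowMul, PowerSeries.kmTerm_sumXPowMul_left,
    PowerSeries.kmTerm_sumXPowMul_right, sumXPowMul_sumXPowMul,
    sum_antidiagonal_kmTerm_assoc _ _ (Derivation.mapPowerSeries_comm hcomm)]
end

section
/- Let g be a Lie algebra and R : g → g a linear map satisfying the modified Yang–Baxter equation [Ra,Rb] − R([Ra,b]+[a,Rb]) + α[a,b] = 0 for some α ∈ ℝ. Then the bracket [a,b]_R := [Ra,b] + [a,Rb] is a Lie bracket on g (antisymmetric and satisfying the Jacobi identity). -/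
/-!
The modified Yang–Baxter equation says exactly that `R [a, b]_R = [R a, R b] + α [a, b]`.
Substituting this into the cyclic sum of `[a, [b, c]_R]_R`, the twelve resulting terms regroup
into the Jacobi identities of `(R a, R b, c)`, `(a, R b, R c)`, `(R a, b, R c)` and `α` times
that of `(a, b, c)`.
-/

namespace LieAlgebra

variable {K L : Type*} [CommRing K] [LieRing L] [LieAlgebra K L]

def rBracket (R : L →ₗ[K] L) (a b : L) : L := ⁅R a, b⁆ + ⁅a, R b⁆

theorem rBracket_skew (R : L →ₗ[K] L) (a b : L) : rBracket R a b = -rBracket R b a := by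
  simp only [rBracket, ← lie_skew b (R a), ← lie_skew (R b) a]
  abel

theorem map_rBracket_of_modifiedYangBaxter {R : L →ₗ[K] L} {α : K}
    (hyb : ∀ a b : L, ⁅R a, R b⁆ - R (⁅R a, b⁆ + ⁅a, R b⁆) + α • ⁅a, b⁆ = 0) (a b : L) :
    R (rBracket R a b) = ⁅R a, R b⁆ + α • ⁅a, b⁆ := by
  rw [← sub_eq_zero, ← neg_eq_zero, ← hyb a b, rBracket]
  abel

theorem rBracket_jacobi {R : L →ₗ[K] L} {α : K}
    (hR : ∀ a b : L, R (rBracket R a b) = ⁅R a, R b⁆ + α • ⁅a, b⁆) (a b c : L) :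
    rBracket R a (rBracket R b c) + rBracket R b (rBracket R c a) +
      rBracket R c (rBracket R a b) = 0 := by
  have jacobi_RRc := lie_jacobi (R a) (R b) c
  have jacobi_aRR := lie_jacobi a (R b) (R c)
  have jacobi_RbR := lie_jacobi (R a) b (R c)
  have jacobi_abc := lie_jacobi a b c
  simp only [rBracket] at hR ⊢
  simp only [hR, lie_add, lie_smul]
  linear_combination (norm := module) jacobi_RRc + jacobi_aRR + jacobi_RbR + α • jacobi_abc

end LieAlgebra

/-- if `R` satisfies the modified Yang–Baxter equation
`[Ra,Rb] − R([Ra,b]+[a,Rb]) + α[a,b] = 0`, then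
`[a,b]_R := [Ra,b] + [a,Rb]` is a Lie bracket (antisymmetric and Jacobi). -/
theorem stmt10 {L : Type*} [LieRing L] [LieAlgebra ℝ L]
    (R : L →ₗ[ℝ] L) (α : ℝ)
    (hyb : ∀ a b : L, ⁅R a, R b⁆ - R (⁅R a, b⁆ + ⁅a, R b⁆) + α • ⁅a, b⁆ = 0) :
    let br : L → L → L := fun a b => ⁅R a, b⁆ + ⁅a, R b⁆
    (∀ a b, br a b = - br b a) ∧
    (∀ a b c, br a (br b c) + br b (br c a) + br c (br a b) = 0) :=
  ⟨LieAlgebra.rBracket_skew R,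
    LieAlgebra.rBracket_jacobi (LieAlgebra.map_rBracket_of_modifiedYangBaxter hyb)⟩
end

section
/- Let θ : C^∞(g*) differentials → vector fields be the map dH ↦ {R(dH), ·} associated with an R-matrix Lie bracket, and let C₁, C₂ be Casimir functions of the natural Lie–Poisson bracket on g*. Then C₁ and C₂ are in involution with respect to the R-deformed Lie–Poisson bracket: {C₁, C₂}₁(L) := ⟨L, [dC₂, dC₁]_R⟩ = 0 for all L ∈ g*. -/
theorem map_lie_swap_eq_zero {g A F : Type*} [LieRing g] [AddCommGroup A] [FunLike F g A]
    [AddMonoidHomClass F g A] (f : F) {a b : g} (h : f ⁅a, b⁆ = 0) : f ⁅b, a⁆ = 0 := by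
  rw [← lie_skew, map_neg, h, neg_zero]

theorem stmt15_general {g : Type*} [LieRing g] [LieAlgebra ℝ g]
    (B : g →ₗ[ℝ] g →ₗ[ℝ] ℝ)
    (R : g →ₗ[ℝ] g) (d1 d2 : g → g)
    (hC1 : ∀ L x : g, B L ⁅d1 L, x⁆ = 0)
    (hC2 : ∀ L x : g, B L ⁅d2 L, x⁆ = 0) :
    ∀ L : g, B L (⁅R (d2 L), d1 L⁆ + ⁅d2 L, R (d1 L)⁆) = 0 := by
  intro L
  rw [map_add, map_lie_swap_eq_zero (B L) (hC1 L _), hC2 L _, add_zero]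

/-- Casimir functions of the natural Lie–Poisson bracket are in
involution with respect to the R-deformed Lie–Poisson bracket:
`{C₁,C₂}₁(L) = ⟨L, [dC₂, dC₁]_R⟩ = 0`. -/
theorem stmt15 {g : Type*} [LieRing g] [LieAlgebra ℝ g]
    (B : g →ₗ[ℝ] g →ₗ[ℝ] ℝ)
    (hsymm : ∀ a b : g, B a b = B b a)
    (hinv : ∀ a b c : g, B ⁅a, b⁆ c + B b ⁅a, c⁆ = 0)
    (hnd : ∀ a : g, (∀ b, B a b = 0) → a = 0)
    (R : g →ₗ[ℝ] g) (d1 d2 : g → g)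
    (hC1 : ∀ L x : g, B L ⁅d1 L, x⁆ = 0)
    (hC2 : ∀ L x : g, B L ⁅d2 L, x⁆ = 0) :
    ∀ L : g, B L (⁅R (d2 L), d1 L⁆ + ⁅d2 L, R (d1 L)⁆) = 0 :=
  stmt15_general B R d1 d2 hC1 hC2
end
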